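/- arXiv:1401.2711 — 3 statements merged into one kernel-verified Lean document; each statement's English description precedes it below -/
import Mathlib

section
/- Suppose ω_{i_{k+1} i_k} = 1 for all k = 1,…,n−1. Then the matrix Ω_{i_n} Ω_{i_{n-1}} ⋯ Ω_{i_1} has a nonzero diagonal entry if and only if ω_{i_1 i_n} = 1, and in that case the unique nonzero diagonal entry is at position (i_1, i_1). -/
open Matrix Filter
open scoped Kronecker

/-- `seqProd A n = A (n-1) * ⋯ * A 1 * A 0`. -/
def seqProd {α : Type*} [Monoid α] (A : ℕ → α) (n : ℕ) : α :=
  ((List.range n).reverse.map A).prod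

/-- The matrix `Ω_i = ω_i^T δ_i`: outer product of the `i`-th column of `ω`
with the `i`-th standard basis row vector. -/
def OmegaM {N : ℕ} (ω : Matrix (Fin N) (Fin N) ℂ) (i : Fin N) :
    Matrix (Fin N) (Fin N) ℂ :=
  vecMulVec (fun j => ω j i) (fun k => if k = i then 1 else 0)

/-- Ω-admissibility of the finite sequence `i 0, …, i (n-1)`. -/
def Adm {N : ℕ} (ω : Matrix (Fin N) (Fin N) ℂ) (i : ℕ → Fin N) (n : ℕ) : Prop :=
  (∀ k, k + 1 < n → ω (i (k + 1)) (i k) = 1) ∧ ∃ j, ω j (i (n - 1)) = 1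

/-- Ω-admissible and periodically extendable. -/
def PerAdm {N : ℕ} (ω : Matrix (Fin N) (Fin N) ℂ) (i : ℕ → Fin N) (n : ℕ) : Prop :=
  Adm ω i n ∧ ω (i 0) (i (n - 1)) = 1

/-- Only the consecutive-transition condition (the set `W⁰`). -/
def AdmZero {N : ℕ} (ω : Matrix (Fin N) (Fin N) ℂ) (i : ℕ → Fin N) (n : ℕ) : Prop :=
  ∀ k, k + 1 < n → ω (i (k + 1)) (i k) = 1

/-- Extendability to an infinite admissible sequence (the set `W^∞`). -/
def AdmInf {N : ℕ} (ω : Matrix (Fin N) (Fin N) ℂ) (i : ℕ → Fin N) (n : ℕ) : Prop :=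
  ∃ j : ℕ → Fin N, (∀ k, k < n → j k = i k) ∧ ∀ k, ω (j (k + 1)) (j k) = 1

/-- The norm `|||M||| = max_i Σ_j ‖m_{ij}‖` on `N × N` block matrices with `d × d` blocks. -/
noncomputable def blockNorm {N d : ℕ} (nrm : Matrix (Fin d) (Fin d) ℂ → ℝ)
    (M : Matrix (Fin N × Fin d) (Fin N × Fin d) ℂ) : ℝ :=
  ⨆ i : Fin N, ∑ j : Fin N, nrm (Matrix.of fun a b => M (i, a) (j, b))

/-- The lifted matrix `A^{(i)} = Ω_i ⊗ A_i`. -/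
def liftA {N d : ℕ} (ω : Matrix (Fin N) (Fin N) ℂ)
    (A : Fin N → Matrix (Fin d) (Fin d) ℂ) (i : Fin N) :
    Matrix (Fin N × Fin d) (Fin N × Fin d) ℂ :=
  OmegaM ω i ⊗ₖ A i

/-- Spectral radius of a complex matrix, as a real number. -/
noncomputable def sprad {m : Type*} [Fintype m] [DecidableEq m] (M : Matrix m m ℂ) : ℝ :=
  (spectralRadius ℂ M).toReal

/-- `ρ_n(𝒜, Ω)`. -/
noncomputable def rhoMark {N d : ℕ} (nrm : Matrix (Fin d) (Fin d) ℂ → ℝ)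
    (ω : Matrix (Fin N) (Fin N) ℂ) (A : Fin N → Matrix (Fin d) (Fin d) ℂ) (n : ℕ) : ℝ :=
  sSup {x : ℝ | ∃ i : ℕ → Fin N, Adm ω i n ∧
    x = nrm (seqProd (fun k => A (i k)) n) ^ ((1 : ℝ) / n)}

/-- `ρ^{(per)}_n(𝒜, Ω)`. -/
noncomputable def rhoPerMark {N d : ℕ} (nrm : Matrix (Fin d) (Fin d) ℂ → ℝ)
    (ω : Matrix (Fin N) (Fin N) ℂ) (A : Fin N → Matrix (Fin d) (Fin d) ℂ) (n : ℕ) : ℝ :=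
  sSup {x : ℝ | ∃ i : ℕ → Fin N, PerAdm ω i n ∧
    x = nrm (seqProd (fun k => A (i k)) n) ^ ((1 : ℝ) / n)}

/-- `ρ^{(0)}_n(𝒜, Ω)`. -/
noncomputable def rhoZeroMark {N d : ℕ} (nrm : Matrix (Fin d) (Fin d) ℂ → ℝ)
    (ω : Matrix (Fin N) (Fin N) ℂ) (A : Fin N → Matrix (Fin d) (Fin d) ℂ) (n : ℕ) : ℝ :=
  sSup {x : ℝ | ∃ i : ℕ → Fin N, AdmZero ω i n ∧
    x = nrm (seqProd (fun k => A (i k)) n) ^ ((1 : ℝ) / n)}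

/-- `ρ^{(∞)}_n(𝒜, Ω)`. -/
noncomputable def rhoInfMark {N d : ℕ} (nrm : Matrix (Fin d) (Fin d) ℂ → ℝ)
    (ω : Matrix (Fin N) (Fin N) ℂ) (A : Fin N → Matrix (Fin d) (Fin d) ℂ) (n : ℕ) : ℝ :=
  sSup {x : ℝ | ∃ i : ℕ → Fin N, AdmInf ω i n ∧
    x = nrm (seqProd (fun k => A (i k)) n) ^ ((1 : ℝ) / n)}

/-- `ρ̂_n(𝒜, Ω)`. -/
noncomputable def rhoHatMark {N d : ℕ} (ω : Matrix (Fin N) (Fin N) ℂ)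
    (A : Fin N → Matrix (Fin d) (Fin d) ℂ) (n : ℕ) : ℝ :=
  sSup {x : ℝ | ∃ i : ℕ → Fin N, Adm ω i n ∧
    x = sprad (seqProd (fun k => A (i k)) n) ^ ((1 : ℝ) / n)}

/-- `ρ̂^{(per)}_n(𝒜, Ω)`. -/
noncomputable def rhoHatPerMark {N d : ℕ} (ω : Matrix (Fin N) (Fin N) ℂ)
    (A : Fin N → Matrix (Fin d) (Fin d) ℂ) (n : ℕ) : ℝ :=
  sSup {x : ℝ | ∃ i : ℕ → Fin N, PerAdm ω i n ∧
    x = sprad (seqProd (fun k => A (i k)) n) ^ ((1 : ℝ) / n)}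

/-! Each `Ω_a = ω_a δ_a` is rank one and `δ_a ω_b = ω_{ab}`, so along a path the product
telescopes to `(∏ₖ ω_{i_{k+1} i_k}) · ω_{i_n} δ_{i_1}`. Admissibility makes the scalar `1`, and the
`(j, j)` entry of `ω_{i_n} δ_{i_1}` is `ω_{j i_n}` if `j = i_1` and `0` otherwise. -/

lemma seqProd_succ {α : Type*} [Monoid α] (A : ℕ → α) (n : ℕ) :
    seqProd A (n + 1) = A n * seqProd A n := by
  simp [seqProd, List.range_succ]

lemma OmegaM_eq_vecMulVec_single {N : ℕ} (ω : Matrix (Fin N) (Fin N) ℂ) (a : Fin N) :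
    OmegaM ω a = vecMulVec (fun j => ω j a) (Pi.single a 1) := by
  unfold OmegaM
  congr 1
  ext k
  exact (Pi.single_apply a 1 k).symm

lemma seqProd_OmegaM {N : ℕ} (ω : Matrix (Fin N) (Fin N) ℂ) (i : ℕ → Fin N) (n : ℕ) :
    seqProd (fun k => OmegaM ω (i k)) (n + 1) =
      (∏ k ∈ Finset.range n, ω (i (k + 1)) (i k)) •
        vecMulVec (fun j => ω j (i n)) (Pi.single (i 0) 1) := by
  induction n with
  | zero => simp [seqProd, OmegaM_eq_vecMulVec_single]
  | succ n ih =>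
    rw [seqProd_succ, ih, mul_smul_comm, OmegaM_eq_vecMulVec_single, vecMulVec_mul_vecMulVec,
      single_dotProduct, one_mul, vecMulVec_smul, smul_smul, Finset.prod_range_succ]

lemma seqProd_OmegaM_apply_self_ne_zero_iff {N : ℕ} (ω : Matrix (Fin N) (Fin N) ℂ)
    (i : ℕ → Fin N) (n : ℕ) (hadm : ∀ k < n, ω (i (k + 1)) (i k) = 1) (j : Fin N) :
    seqProd (fun k => OmegaM ω (i k)) (n + 1) j j ≠ 0 ↔ j = i 0 ∧ ω (i 0) (i n) ≠ 0 := by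
  have hpath : ∏ k ∈ Finset.range n, ω (i (k + 1)) (i k) = 1 :=
    Finset.prod_eq_one fun k hk => hadm k (Finset.mem_range.mp hk)
  rw [seqProd_OmegaM, hpath, one_smul, vecMulVec_apply, Pi.single_apply]
  by_cases hj : j = i 0 <;> simp [hj]

theorem stmt2 {N : ℕ} (ω : Matrix (Fin N) (Fin N) ℂ)
    (hω : ∀ a b, ω a b = 0 ∨ ω a b = 1) (i : ℕ → Fin N) (n : ℕ) (hn : 1 ≤ n)
    (hadm : ∀ k, k + 1 < n → ω (i (k + 1)) (i k) = 1) :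
    ((∃ j, seqProd (fun k => OmegaM ω (i k)) n j j ≠ 0) ↔ ω (i 0) (i (n - 1)) = 1) ∧
    (ω (i 0) (i (n - 1)) = 1 →
      ∀ j, seqProd (fun k => OmegaM ω (i k)) n j j ≠ 0 ↔ j = i 0) := by
  obtain ⟨m, rfl⟩ := Nat.exists_eq_add_of_le' hn
  have hdiag := seqProd_OmegaM_apply_self_ne_zero_iff ω i m fun k hk => hadm k (by omega)
  have hbool : ω (i 0) (i m) ≠ 0 ↔ ω (i 0) (i m) = 1 := by
    rcases hω (i 0) (i m) with h | h <;> simp [h]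
  simp only [Nat.add_sub_cancel, hdiag, hbool]
  exact ⟨⟨fun ⟨_, _, h⟩ => h, fun h => ⟨i 0, rfl, h⟩⟩, fun h j => and_iff_left h⟩
end

section
/- If the sequence (i_1,…,i_n) is Ω-admissible, then A^{(i_n)} ⋯ A^{(i_1)} = (ω_{i_n}^T δ_{i_1}) ⊗ (A_{i_n} ⋯ A_{i_1}), a block matrix whose nonzero blocks all lie in the i_1-th block column and each equal A_{i_n} ⋯ A_{i_1}; consequently |||A^{(i_n)} ⋯ A^{(i_1)}||| = ‖A_{i_n} ⋯ A_{i_1}‖. -/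
/-!
Since `Ω_a * vecMulVec u v = vecMulVec ω_a (u a • v)` and `ω_{i_{k+1} i_k} = 1` along an admissible
sequence, the mixed-product rule for `⊗ₖ` telescopes the product of the lifted matrices to
`(ω_{i_n}^T δ_{i_1}) ⊗ (A_{i_n} ⋯ A_{i_1})`. The `(a, b)` block of `B ⊗ₖ P` is `B a b • P`, so
`|||B ⊗ₖ P||| = (max_a Σ_b |B a b|) · ‖P‖`; for `B = ω_{i_n}^T δ_{i_1}` the first factor is
`max_a |ω_{a i_n}| = 1`, because that column is `0/1`-valued and contains a `1` by admissibility.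
-/

open Matrix Filter
open scoped Kronecker

lemma seqProd_one {α : Type*} [Monoid α] (A : ℕ → α) : seqProd A 1 = A 0 := by
  simp [seqProd]

lemma omegaM_mul_vecMulVec {N : ℕ} (ω : Matrix (Fin N) (Fin N) ℂ) (a : Fin N)
    (u v : Fin N → ℂ) :
    OmegaM ω a * vecMulVec u v = vecMulVec (fun j => ω j a) (u a • v) := by
  have hδ : (fun k => if k = a then (1 : ℂ) else 0) = Pi.single a 1 := by
    funext k
    simp [Pi.single_apply]
  rw [OmegaM, vecMulVec_mul_vecMulVec, hδ, single_dotProduct, one_mul]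

theorem seqProd_liftA_of_admZero {N d : ℕ} (ω : Matrix (Fin N) (Fin N) ℂ)
    (A : Fin N → Matrix (Fin d) (Fin d) ℂ) (i : ℕ → Fin N) {n : ℕ} (hn : 1 ≤ n)
    (h : AdmZero ω i n) :
    seqProd (fun k => liftA ω A (i k)) n =
      vecMulVec (fun j => ω j (i (n - 1))) (fun k => if k = i 0 then 1 else 0) ⊗ₖ
        seqProd (fun k => A (i k)) n := by
  induction n, hn using Nat.le_induction with
  | base => simp only [seqProd_one, liftA, OmegaM]
  | succ m hm ih =>
    have hstep : ω (i m) (i (m - 1)) = 1 := by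
      simpa [Nat.sub_add_cancel hm] using h (m - 1) (by omega)
    rw [seqProd_succ, seqProd_succ, ih fun k hk => h k (by omega), liftA,
      ← mul_kronecker_mul, omegaM_mul_vecMulVec, hstep, one_smul, Nat.add_sub_cancel]

lemma kronecker_block_eq_smul {R l m n p : Type*} [Mul R] (B : Matrix l m R)
    (P : Matrix n p R) (a : l) (b : m) :
    Matrix.of (fun x y => (B ⊗ₖ P) (a, x) (b, y)) = B a b • P := by
  ext x y
  simp [kroneckerMap_apply]

theorem blockNorm_kronecker {N d : ℕ} (nrm : Matrix (Fin d) (Fin d) ℂ → ℝ)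
    (hsmul : ∀ (c : ℂ) M, nrm (c • M) = ‖c‖ * nrm M)
    (B : Matrix (Fin N) (Fin N) ℂ) {P : Matrix (Fin d) (Fin d) ℂ} (hP : 0 ≤ nrm P) :
    blockNorm nrm (B ⊗ₖ P) = (⨆ a, ∑ b, ‖B a b‖) * nrm P := by
  simp only [blockNorm, kronecker_block_eq_smul, hsmul, ← Finset.sum_mul]
  exact (Real.iSup_mul_of_nonneg hP _).symm

lemma iSup_sum_norm_vecMulVec_indicator {N : ℕ} (u : Fin N → ℂ)
    (hu : ∀ a, u a = 0 ∨ u a = 1) {j : Fin N} (hj : u j = 1) (i₀ : Fin N) :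
    ⨆ a, ∑ b, ‖vecMulVec u (fun k => if k = i₀ then 1 else 0) a b‖ = 1 := by
  have hrow : ∀ a, ∑ b, ‖vecMulVec u (fun k => if k = i₀ then (1 : ℂ) else 0) a b‖ = ‖u a‖ := by
    intro a
    simp [vecMulVec_apply, apply_ite (‖·‖)]
  have : Nonempty (Fin N) := ⟨j⟩
  simp only [hrow]
  refine le_antisymm (ciSup_le fun a => ?_) ?_
  · rcases hu a with h | h <;> simp [h]
  · simpa [hj] using le_ciSup (Set.finite_range fun a => ‖u a‖).bddAbove j

theorem stmt5_general {N d : ℕ} (ω : Matrix (Fin N) (Fin N) ℂ)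
    (hω : ∀ a b, ω a b = 0 ∨ ω a b = 1) (nrm : Matrix (Fin d) (Fin d) ℂ → ℝ)
    (hnn : ∀ M, 0 ≤ nrm M)
    (hsmul : ∀ (c : ℂ) M, nrm (c • M) = ‖c‖ * nrm M)
    (A : Fin N → Matrix (Fin d) (Fin d) ℂ) (i : ℕ → Fin N) (n : ℕ) (hn : 1 ≤ n)
    (hadm : Adm ω i n) :
    seqProd (fun k => liftA ω A (i k)) n =
      (vecMulVec (fun j => ω j (i (n - 1))) (fun k => if k = i 0 then 1 else 0)) ⊗ₖ
        seqProd (fun k => A (i k)) n ∧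
    blockNorm nrm (seqProd (fun k => liftA ω A (i k)) n) =
      nrm (seqProd (fun k => A (i k)) n) := by
  obtain ⟨hchain, j, hj⟩ := hadm
  have hprod := seqProd_liftA_of_admZero ω A i hn hchain
  refine ⟨hprod, ?_⟩
  rw [hprod, blockNorm_kronecker nrm hsmul _ (hnn _),
    iSup_sum_norm_vecMulVec_indicator _ (fun a => hω a _) hj, one_mul]

theorem stmt5 {N d : ℕ} (ω : Matrix (Fin N) (Fin N) ℂ)
    (hω : ∀ a b, ω a b = 0 ∨ ω a b = 1) (nrm : Matrix (Fin d) (Fin d) ℂ → ℝ)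
    (hnn : ∀ M, 0 ≤ nrm M) (hdef : ∀ M, nrm M = 0 ↔ M = 0)
    (hadd : ∀ M₁ M₂, nrm (M₁ + M₂) ≤ nrm M₁ + nrm M₂)
    (hsmul : ∀ (c : ℂ) M, nrm (c • M) = ‖c‖ * nrm M)
    (hmul : ∀ M₁ M₂, nrm (M₁ * M₂) ≤ nrm M₁ * nrm M₂)
    (A : Fin N → Matrix (Fin d) (Fin d) ℂ) (i : ℕ → Fin N) (n : ℕ) (hn : 1 ≤ n)
    (hadm : Adm ω i n) :
    seqProd (fun k => liftA ω A (i k)) n =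
      (vecMulVec (fun j => ω j (i (n - 1))) (fun k => if k = i 0 then 1 else 0)) ⊗ₖ
        seqProd (fun k => A (i k)) n ∧
    blockNorm nrm (seqProd (fun k => liftA ω A (i k)) n) =
      nrm (seqProd (fun k => A (i k)) n) :=
  stmt5_general ω hω nrm hnn hsmul A i n hn hadm
end

section
/- If (i_1,…,i_n) is a sequence with ω_{i_{j+1} i_j} = 1 for all 1 ≤ j ≤ n−1 but ω_{i_1 i_n} = 0 (not periodically extendable), then the product A^{(i_n)} ⋯ A^{(i_1)} of lifted matrices is nilpotent, i.e., its spectral radius is 0. -/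
open Matrix Filter
open scoped Kronecker

lemma seqProd_kronecker {l m α : Type*} [Fintype l] [Fintype m] [DecidableEq l] [DecidableEq m]
    [CommSemiring α] (f : ℕ → Matrix l l α) (g : ℕ → Matrix m m α) (n : ℕ) :
    seqProd (fun k => f k ⊗ₖ g k) n = seqProd f n ⊗ₖ seqProd g n := by
  induction n with
  | zero => simp [seqProd]
  | succ n ih => rw [seqProd_succ, seqProd_succ, seqProd_succ, ih, mul_kronecker_mul]

lemma Matrix.kronecker_pow {l m α : Type*} [Fintype l] [Fintype m] [DecidableEq l]
    [DecidableEq m] [CommSemiring α] (B : Matrix l l α) (C : Matrix m m α) (k : ℕ) :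
    (B ⊗ₖ C) ^ k = (B ^ k) ⊗ₖ (C ^ k) := by
  induction k with
  | zero => simp
  | succ k ih => rw [pow_succ, pow_succ, pow_succ, ih, mul_kronecker_mul]

lemma IsNilpotent.kronecker_left {l m α : Type*} [Fintype l] [Fintype m] [DecidableEq l]
    [DecidableEq m] [CommSemiring α] {B : Matrix l l α} (hB : IsNilpotent B)
    (C : Matrix m m α) : IsNilpotent (B ⊗ₖ C) := by
  obtain ⟨k, hk⟩ := hB
  exact ⟨k, by rw [Matrix.kronecker_pow, hk, zero_kronecker]⟩

lemma IsNilpotent.spectrum_subset_zero {𝕜 A : Type*} [Field 𝕜] [Ring A] [Algebra 𝕜 A] {a : A}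
    (ha : IsNilpotent a) : spectrum 𝕜 a ⊆ {0} := by
  intro μ hμ
  by_contra hμ0
  refine hμ ?_
  rw [spectrum.mem_resolventSet_iff, sub_eq_add_neg]
  exact ha.neg.isUnit_add_left_of_commute ((Ne.isUnit hμ0).map _) (Algebra.commutes μ _).symm

lemma IsNilpotent.spectralRadius_eq_zero {𝕜 A : Type*} [NormedField 𝕜] [Ring A] [Algebra 𝕜 A]
    {a : A} (ha : IsNilpotent a) : spectralRadius 𝕜 a = 0 := by
  refine le_antisymm (iSup₂_le fun μ hμ => ?_) bot_le
  rw [Set.mem_singleton_iff.mp (ha.spectrum_subset_zero hμ), nnnorm_zero, ENNReal.coe_zero]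

lemma seqProd_omegaM_succ {N : ℕ} (ω : Matrix (Fin N) (Fin N) ℂ) (i : ℕ → Fin N) (n : ℕ) :
    seqProd (fun k => OmegaM ω (i k)) (n + 1) =
      (∏ k ∈ Finset.range n, ω (i (k + 1)) (i k)) •
        vecMulVec (fun j => ω j (i n)) (fun k => if k = i 0 then 1 else 0) := by
  induction n with
  | zero => simp [seqProd, OmegaM]
  | succ n ih =>
    rw [seqProd_succ, ih, OmegaM, mul_smul_comm, vecMulVec_mul_vecMulVec,
      Finset.prod_range_succ, mul_smul, vecMulVec_smul]
    simp [dotProduct]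

lemma sq_seqProd_omegaM_succ_eq_zero {N : ℕ} (ω : Matrix (Fin N) (Fin N) ℂ) (i : ℕ → Fin N) (n : ℕ)
    (h : ω (i 0) (i n) = 0) : seqProd (fun k => OmegaM ω (i k)) (n + 1) ^ 2 = 0 := by
  rw [seqProd_omegaM_succ, sq, smul_mul_smul_comm, vecMulVec_mul_vecMulVec]
  simp [dotProduct, h]

theorem stmt9_general {N d : ℕ} (ω : Matrix (Fin N) (Fin N) ℂ)
    (A : Fin N → Matrix (Fin d) (Fin d) ℂ) (i : ℕ → Fin N) (n : ℕ) (hn : 1 ≤ n)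
    (hnotper : ω (i 0) (i (n - 1)) = 0) :
    IsNilpotent (seqProd (fun k => liftA ω A (i k)) n) ∧
      spectralRadius ℂ (seqProd (fun k => liftA ω A (i k)) n) = 0 := by
  obtain ⟨m, rfl⟩ := Nat.exists_eq_add_of_le' hn
  have hΩ : IsNilpotent (seqProd (fun k => OmegaM ω (i k)) (m + 1)) :=
    ⟨2, sq_seqProd_omegaM_succ_eq_zero ω i m hnotper⟩
  have hnil : IsNilpotent (seqProd (fun k => liftA ω A (i k)) (m + 1)) := by
    simpa only [liftA, seqProd_kronecker] using
      hΩ.kronecker_left (seqProd (fun k => A (i k)) (m + 1))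
  exact ⟨hnil, hnil.spectralRadius_eq_zero⟩

theorem stmt9 {N d : ℕ} (ω : Matrix (Fin N) (Fin N) ℂ)
    (hω : ∀ a b, ω a b = 0 ∨ ω a b = 1)
    (A : Fin N → Matrix (Fin d) (Fin d) ℂ) (i : ℕ → Fin N) (n : ℕ) (hn : 1 ≤ n)
    (hadm : ∀ k, k + 1 < n → ω (i (k + 1)) (i k) = 1)
    (hnotper : ω (i 0) (i (n - 1)) = 0) :
    IsNilpotent (seqProd (fun k => liftA ω A (i k)) n) ∧
      spectralRadius ℂ (seqProd (fun k => liftA ω A (i k)) n) = 0 :=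
  stmt9_general ω A i n hn hnotper
end
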